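/- arXiv:1805.01888 — 2 statements merged into one kernel-verified Lean document; each statement's English description precedes it below -/
import Mathlib

section
/- Let R be a commutative ring, let n ≥ 0 and d ≥ 1 be integers, and let A be an n×n matrix over R. Let B be the dn×dn matrix, with rows and columns indexed by pairs (i, j) with 0 ≤ i ≤ d−1 and 1 ≤ j ≤ n, defined in n×n blocks as follows: the block of B in block-row i and block-column i−1 is the identity matrix I_n for each 1 ≤ i ≤ d−1, the block of B in block-row 0 and block-column d−1 is A, and all other blocks are zero. Then the identity det(X·I_{dn} − B) = det(X^d·I_n − A) holds in the polynomial ring R[X]. -/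
open Polynomial

/-!
Let `N` be the nilpotent shift of the `d` blocks and `E = E_{0,d-1}`, so that
`B = N ⊗ 1 + E ⊗ A`. Right multiplication by `W ⊗ 1`, where
`W = x^d (x - N)⁻¹ = ∑ₖ x^(d-1-k) Nᵏ`, turns `x - B` into `x^d - (E W) ⊗ A`. Since `E W`
has a single nonzero row, this matrix is block upper triangular with diagonal blocks
`x^d - A, x^d, …, x^d`. Comparing determinants gives
`det (x - B) · x^((d-1)dn) = det (x^d - A) · x^(d(d-1)n)`, and `X` is a nonzerodivisor of `R[X]`.
-/

open scoped Kronecker nonZeroDivisors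

namespace Matrix

variable {R : Type*} [CommRing R]

section BlockTriangular

variable {α ι : Type*} [Fintype α] [LinearOrder α] [Fintype ι] [DecidableEq ι]

theorem BlockTriangular.det_fst {M : Matrix (α × ι) (α × ι) R}
    (h : M.BlockTriangular Prod.fst) :
    M.det = ∏ k, (M.submatrix (Prod.mk k) (Prod.mk k)).det := by
  rw [h.det_fintype]
  refine Finset.prod_congr rfl fun k _ => ?_
  let e : ι ≃ {a : α × ι // a.1 = k} :=
    { toFun j := ⟨(k, j), rfl⟩
      invFun a := a.1.2
      left_inv _ := rfl
      right_inv := by rintro ⟨⟨_, _⟩, rfl⟩; rfl }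
  rw [← det_submatrix_equiv_self e]
  rfl

theorem det_kronecker_add_kronecker_of_isUpperTriangular {D F : Matrix α α R}
    (hD : D.IsUpperTriangular) (hF : F.IsUpperTriangular) (A₁ A₂ : Matrix ι ι R) :
    (D ⊗ₖ A₁ + F ⊗ₖ A₂).det = ∏ k, (D k k • A₁ + F k k • A₂).det := by
  have h : (D ⊗ₖ A₁ + F ⊗ₖ A₂).BlockTriangular Prod.fst := fun p q hqp => by
    simp [hD hqp, hF hqp]
  rw [h.det_fst]
  refine Finset.prod_congr rfl fun k _ => congrArg det ?_
  ext
  simp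

end BlockTriangular

section Shift

variable (m : ℕ)

variable (R) in
def subdiagonalShift : Matrix (Fin (m + 1)) (Fin (m + 1)) R :=
  of fun i j => if (i : ℕ) = j + 1 then 1 else 0

/-- `x ^ (m + 1) • (x • 1 - subdiagonalShift R m)⁻¹`, that is,
`∑ₖ x ^ (m - k) • subdiagonalShift R m ^ k`. -/
def scaledShiftInverse (x : R) : Matrix (Fin (m + 1)) (Fin (m + 1)) R :=
  of fun i j => if j ≤ i then x ^ (m + j - i : ℕ) else 0

variable {m}

theorem subdiagonalShift_mul_apply_zero {α : Type*} (M : Matrix (Fin (m + 1)) α R) (k : α) :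
    (subdiagonalShift R m * M) 0 k = 0 := by
  simp [mul_apply, subdiagonalShift]

theorem subdiagonalShift_mul_apply_succ {α : Type*} (M : Matrix (Fin (m + 1)) α R)
    (i : Fin m) (k : α) : (subdiagonalShift R m * M) i.succ k = M i.castSucc k := by
  rw [mul_apply, Fintype.sum_eq_single i.castSucc]
  · simp [subdiagonalShift]
  · intro j hj
    simp only [subdiagonalShift, of_apply, Fin.val_succ, add_left_inj, ite_mul, one_mul,
      zero_mul]
    exact if_neg fun h => hj (Fin.ext h.symm)

theorem smul_one_sub_subdiagonalShift_mul_scaledShiftInverse (x : R) :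
    (x • 1 - subdiagonalShift R m) * scaledShiftInverse m x = x ^ (m + 1) • 1 := by
  ext i k
  rw [sub_mul, smul_mul, one_mul]
  rcases Fin.eq_zero_or_eq_succ i with rfl | ⟨i, rfl⟩
  · simp +contextual [subdiagonalShift_mul_apply_zero, scaledShiftInverse, one_apply, eq_comm,
      pow_succ']
  · rw [sub_apply, smul_apply, subdiagonalShift_mul_apply_succ]
    simp only [scaledShiftInverse, of_apply, smul_apply, one_apply, smul_eq_mul, Fin.le_def,
      Fin.ext_iff, Fin.val_succ, Fin.val_castSucc]
    have hi := i.isLt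
    split_ifs <;> try omega
    · rw [← pow_succ', show m + k - (i + 1) + 1 = m + k - i by omega, sub_self, mul_zero]
    · rw [show m + k - (i + 1) = m by omega, ← pow_succ', sub_zero, mul_one]
    · simp

theorem det_scaledShiftInverse (x : R) : (scaledShiftInverse m x).det = (x ^ m) ^ (m + 1) := by
  rw [det_of_isLowerTriangular]
  · simp [scaledShiftInverse]
  · intro i j (hij : i < j)
    simp [scaledShiftInverse, not_le.2 hij]

end Shift

section TwistedCyclicShift

variable {ι : Type*} [DecidableEq ι]

def twistedCyclicShift (m : ℕ) (A : Matrix ι ι R) :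
    Matrix (Fin (m + 1) × ι) (Fin (m + 1) × ι) R :=
  subdiagonalShift R m ⊗ₖ 1 + single 0 (Fin.last m) 1 ⊗ₖ A

theorem smul_one_sub_twistedCyclicShift (x : R) (m : ℕ) (A : Matrix ι ι R) :
    x • 1 - twistedCyclicShift m A =
      (x • 1 - subdiagonalShift R m) ⊗ₖ 1 + single 0 (Fin.last m) 1 ⊗ₖ (-A) := by
  ext ⟨i, j⟩ ⟨i', j'⟩
  simp only [twistedCyclicShift, sub_apply, add_apply, smul_apply, kroneckerMap_apply, one_apply,
    neg_apply]
  split_ifs <;> simp_all <;> ring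

theorem det_smul_one_sub_twistedCyclicShift [Fintype ι] {x : R} (hx : x ∈ R⁰) (m : ℕ)
    (A : Matrix ι ι R) :
    (x • 1 - twistedCyclicShift m A).det = (x ^ (m + 1) • 1 - A).det := by
  have hdet := congrArg (fun M => (M * scaledShiftInverse m x ⊗ₖ (1 : Matrix ι ι R)).det)
    (smul_one_sub_twistedCyclicShift x m A)
  have hEW : (single 0 (Fin.last m) 1 * scaledShiftInverse m x).IsUpperTriangular :=
    fun i j (hji : j < i) =>
      single_mul_apply_of_ne _ _ _ _ _ ((Fin.zero_le j).trans_lt hji).ne' _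
  simp only [add_mul, ← mul_kronecker_mul, mul_one,
    smul_one_sub_subdiagonalShift_mul_scaledShiftInverse] at hdet
  rw [det_mul, det_kronecker, det_scaledShiftInverse, det_one, one_pow, mul_one,
    det_kronecker_add_kronecker_of_isUpperTriangular
      (fun i j (h : j < i) => by simp [one_apply_ne h.ne']) hEW,
    Fin.prod_univ_succ] at hdet
  simp only [smul_apply, one_apply_eq, smul_eq_mul, mul_one, scaledShiftInverse,
    single_mul_apply_same, of_apply, zero_le, ↓reduceIte, Fin.coe_ofNat_eq_mod, Nat.zero_mod,
    add_zero, Fin.val_last, tsub_self, pow_zero, smul_neg, one_smul, ne_eq, Fin.succ_ne_zero,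
    not_false_eq_true, single_mul_apply_of_ne, zero_smul, neg_zero, det_smul_of_tower, det_one,
    Finset.prod_const, Finset.card_univ, Fintype.card_fin] at hdet
  rw [← sub_eq_add_neg, show ((x ^ (m + 1)) ^ Fintype.card ι) ^ m =
    ((x ^ m) ^ (m + 1)) ^ Fintype.card ι by ring] at hdet
  exact (mul_cancel_right_mem_nonZeroDivisors (pow_mem (pow_mem (pow_mem hx _) _) _)).1 hdet

end TwistedCyclicShift

end Matrix

/-- **Characteristic polynomial of a twisted cyclic shift block matrix.**
Let `A` be an `n × n` matrix over a commutative ring `R` and `d ≥ 1`.  Let `B`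
be the `dn × dn` block matrix whose block in block-row `i` and block-column
`i - 1` is the identity `I_n` for `1 ≤ i ≤ d - 1`, whose block in block-row `0`
and block-column `d - 1` is `A`, and whose other blocks are zero.  Then
`det (X • I_{dn} - B) = det (X^d • I_n - A)` in `R[X]`. -/
theorem charpoly_twisted_cyclic_shift_block_matrix
    (R : Type*) [CommRing R] (n d : ℕ) (hd : 1 ≤ d)
    (A : Matrix (Fin n) (Fin n) R)
    (B : Matrix (Fin d × Fin n) (Fin d × Fin n) R)
    (hB : ∀ (i i' : Fin d) (j j' : Fin n),
      B (i, j) (i', j') =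
        if (i : ℕ) = (i' : ℕ) + 1 then (if j = j' then (1 : R) else 0)
        else if (i : ℕ) = 0 ∧ (i' : ℕ) = d - 1 then A j j' else 0) :
    ((X : R[X]) • (1 : Matrix (Fin d × Fin n) (Fin d × Fin n) R[X]) - B.map C).det =
      (((X : R[X]) ^ d) • (1 : Matrix (Fin n) (Fin n) R[X]) - A.map C).det := by
  obtain ⟨m, rfl⟩ : ∃ m, d = m + 1 := ⟨d - 1, by omega⟩
  have hB' : B.map C = Matrix.twistedCyclicShift m (A.map C) := by
    refine Matrix.ext fun ⟨i, j⟩ ⟨i', j'⟩ => ?_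
    simp only [Matrix.map_apply, hB, Matrix.twistedCyclicShift, Matrix.add_apply,
      Matrix.kroneckerMap_apply, Matrix.subdiagonalShift, Matrix.of_apply, Matrix.single_apply,
      Matrix.one_apply, Nat.add_sub_cancel, Fin.ext_iff, Fin.val_last, Fin.val_zero]
    split_ifs <;> first | omega | simp
  rw [hB']
  exact Matrix.det_smul_one_sub_twistedCyclicShift (X_mem_nonzeroDivisors (R := R)) m (A.map C)
end

section
/- Let G be a finite abelian group and let H, P, N be subgroups of G with N contained in P. For a subgroup S of G write Ann(S) for the subgroup of Hom(G, ℂˣ) consisting of characters trivial on S. Then Ann(H·N) contains Ann(H·P), and the quotient group Ann(H·N)/Ann(H·P) is isomorphic to the character group Hom(P/((H ∩ P)·N), ℂˣ); in particular its order equals the index [P : (H ∩ P)·N]. -/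
/-!
Restricting characters to `P` maps `Ann (H ⊔ N)` onto the characters of `P` trivial on
`(H ⊔ N) ⊓ P`, with kernel `Ann ((H ⊔ N) ⊔ P) = Ann (H ⊔ P)`. Surjectivity is the extension of
characters from the image of `P` in `G ⧸ (H ⊔ N)` to the whole quotient, and the Dedekind law
`(H ⊔ N) ⊓ P = (H ⊓ P) ⊔ N` for `N ≤ P` identifies the target with the character group of
`P ⧸ ((H ⊓ P) ⊔ N)`, whose order is the index by duality of finite abelian groups.
-/

open MonoidHom

theorem MonoidHom.exists_comp_eq_of_injective {G Q M : Type*} [CommGroup G] [Finite G]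
    [CommGroup Q] [CommMonoid M] [HasEnoughRootsOfUnity M (Monoid.exponent G)]
    {ι : Q →* G} (hι : Function.Injective ι) (ψ : Q →* Mˣ) :
    ∃ φ : G →* Mˣ, φ.comp ι = ψ := by
  let e := ι.ofInjective hι
  obtain ⟨φ, hφ⟩ := domRestrict_surjective M ι.range (ψ.comp e.symm.toMonoidHom)
  refine ⟨φ, MonoidHom.ext fun q => ?_⟩
  simpa [e, ofInjective_apply] using DFunLike.congr_fun hφ (e q)

section

variable {G : Type*} [CommGroup G]

theorem Subgroup.subgroupOf_sup_eq_of_le (H : Subgroup G) {N P : Subgroup G} (hNP : N ≤ P) :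
    (H ⊔ N).subgroupOf P = (H ⊓ P ⊔ N).subgroupOf P := by
  rw [sup_comm (H ⊓ P), ← sup_inf_assoc_of_le H hNP, sup_comm N, Subgroup.inf_subgroupOf_right]

variable (K P : Subgroup G)

def QuotientGroup.subgroupOfMap : P ⧸ K.subgroupOf P →* G ⧸ K :=
  QuotientGroup.map (K.subgroupOf P) K P.subtype (K.comap_subtype P).ge

@[simp]
theorem QuotientGroup.subgroupOfMap_mk (p : P) :
    QuotientGroup.subgroupOfMap K P p = (p : G) := rfl

theorem QuotientGroup.subgroupOfMap_injective :
    Function.Injective (QuotientGroup.subgroupOfMap K P) := by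
  refine (injective_iff_map_eq_one _).2 fun x => QuotientGroup.induction_on x fun p hp => ?_
  rw [QuotientGroup.subgroupOfMap_mk, QuotientGroup.eq_one_iff] at hp
  exact (QuotientGroup.eq_one_iff p).2 hp

variable {A : Type*} [CommGroup A]

theorem MonoidHom.coe_ker_domRestrictHom (S : Subgroup G) :
    ((domRestrictHom S A).ker : Set (G →* A)) = {χ | ∀ s ∈ S, χ s = 1} := by
  ext χ
  simp

theorem MonoidHom.mem_ker_domRestrictHom {S : Subgroup G} {χ : G →* A} :
    χ ∈ (domRestrictHom S A).ker ↔ S ≤ χ.ker := by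
  simp [SetLike.le_def]

/-- `(domRestrictHom K A).ker` is the annihilator `Ann K`; a character trivial on `K`, restricted to
`P`, factors through `P ⧸ (K ⊓ P)`. -/
noncomputable def restrictAnnihilator :
    (domRestrictHom K A).ker →* (P ⧸ K.subgroupOf P →* A) :=
  (compHom' (QuotientGroup.subgroupOfMap K P)).comp (domRestrictHomKerEquiv A K).toMonoidHom

theorem restrictAnnihilator_apply (χ : (domRestrictHom K A).ker) :
    restrictAnnihilator K P χ =
      (domRestrictHomKerEquiv A K χ).comp (QuotientGroup.subgroupOfMap K P) := rfl

theorem ker_restrictAnnihilator :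
    (restrictAnnihilator (A := A) K P).ker =
      (domRestrictHom (K ⊔ P) A).ker.subgroupOf (domRestrictHom K A).ker := by
  ext ⟨χ, hχK⟩
  rw [Subgroup.mem_subgroupOf, mem_ker, mem_ker_domRestrictHom, sup_le_iff,
    and_iff_right (mem_ker_domRestrictHom.1 hχK), restrictAnnihilator_apply,
    ← cancel_right (QuotientGroup.mk'_surjective (K.subgroupOf P))]
  simp [MonoidHom.ext_iff, SetLike.le_def]

theorem restrictAnnihilator_surjective [Finite G] (M : Type*) [CommMonoid M]
    [HasEnoughRootsOfUnity M (Monoid.exponent G)] :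
    Function.Surjective (restrictAnnihilator (A := Mˣ) K P) := by
  have := HasEnoughRootsOfUnity.of_dvd M (Group.exponent_quotient_dvd K)
  intro ψ
  obtain ⟨φ, hφ⟩ := exists_comp_eq_of_injective (QuotientGroup.subgroupOfMap_injective K P) ψ
  refine ⟨(domRestrictHomKerEquiv Mˣ K).symm φ, ?_⟩
  rw [restrictAnnihilator_apply, MulEquiv.apply_symm_apply, hφ]

noncomputable def annihilatorQuotientMulEquiv [Finite G] (M : Type*) [CommMonoid M]
    [HasEnoughRootsOfUnity M (Monoid.exponent G)] :
    (domRestrictHom K Mˣ).ker ⧸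
        (domRestrictHom (K ⊔ P) Mˣ).ker.subgroupOf (domRestrictHom K Mˣ).ker ≃*
      (P ⧸ K.subgroupOf P →* Mˣ) :=
  (QuotientGroup.quotientMulEquivOfEq (ker_restrictAnnihilator K P).symm).trans
    (QuotientGroup.quotientKerEquivOfSurjective _ (restrictAnnihilator_surjective K P M))

end

/-- **Quotients of annihilators in character groups.**
Let `G` be a finite abelian group with subgroups `H`, `P`, `N` where `N ≤ P`.
For a subgroup `S ≤ G`, write `Ann S` for the subgroup of `Hom(G, ℂˣ)` of
characters trivial on `S`.  Then `Ann (H·P) ≤ Ann (H·N)`, the quotient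
`Ann (H·N) / Ann (H·P)` is isomorphic to the character group of
`P / ((H ∩ P)·N)`, and in particular its order equals the index
`[P : (H ∩ P)·N]`. -/
theorem quotient_of_annihilators_iso_character_group
    (G : Type*) [CommGroup G] [Fintype G]
    (H P N : Subgroup G) (hNP : N ≤ P)
    (AnnHN AnnHP : Subgroup (G →* ℂˣ))
    (hAnnHN : (AnnHN : Set (G →* ℂˣ)) = {χ : G →* ℂˣ | ∀ s ∈ H ⊔ N, χ s = 1})
    (hAnnHP : (AnnHP : Set (G →* ℂˣ)) = {χ : G →* ℂˣ | ∀ s ∈ H ⊔ P, χ s = 1}) :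
    AnnHP ≤ AnnHN ∧
    Nonempty ((↥AnnHN ⧸ AnnHP.subgroupOf AnnHN) ≃*
      ((↥P ⧸ ((H ⊓ P) ⊔ N).subgroupOf P) →* ℂˣ)) ∧
    Nat.card (↥AnnHN ⧸ AnnHP.subgroupOf AnnHN) =
      (((H ⊓ P) ⊔ N).subgroupOf P).index := by
  have hHNP : H ⊔ N ⊔ P = H ⊔ P := by rw [sup_assoc, sup_eq_right.2 hNP]
  obtain rfl : AnnHN = (domRestrictHom (H ⊔ N) ℂˣ).ker :=
    SetLike.coe_injective (hAnnHN.trans (coe_ker_domRestrictHom _).symm)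
  obtain rfl : AnnHP = (domRestrictHom (H ⊔ N ⊔ P) ℂˣ).ker :=
    SetLike.coe_injective (hAnnHP.trans (by rw [coe_ker_domRestrictHom, hHNP]))
  have hQ := Subgroup.subgroupOf_sup_eq_of_le H hNP
  let e := (annihilatorQuotientMulEquiv (H ⊔ N) P ℂ).trans
    (QuotientGroup.quotientMulEquivOfEq hQ).monoidHomCongrLeft
  refine ⟨fun χ hχ => ?_, ⟨e⟩, ?_⟩
  · exact mem_ker_domRestrictHom.2 (le_sup_left.trans (mem_ker_domRestrictHom.1 hχ))
  · rw [Nat.card_congr e.toEquiv, CommGroup.card_monoidHom_of_hasEnoughRootsOfUnity,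
      Subgroup.index_eq_card]
end
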